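/- Let F ∈ ℂ[y,z,w], viewed inside ℂ[x,y,z,w], and let λ ∈ ℂ be a primitive 3rd root of unity. The ℂ-algebra automorphism of ℂ[x,y,z,w] sending x ↦ λx and fixing y, z, w preserves the ideal (x³ − F) and hence descends to an automorphism σ of T := ℂ[x,y,z,w]/(x³ − F). Then the composite map ℂ[y,z,w] → T takes values in the invariant subalgebra T^σ and induces a ℂ-algebra isomorphism ℂ[y,z,w] ≅ T^σ. -/

import Mathlib

/-!
Writing `R = ℂ[y,z,w]`, the quotient `T` is `R[x]/(x³ − F)`, a free `R`-module with basis
`1, x, x²`. The automorphism `σ` fixes `R` and scales `x` by `λ`, so it acts diagonally on this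
basis with eigenvalues `1, λ, λ²`. Since `λ` and `λ²` differ from `1` and `R` is a domain, an
invariant element has no `x` or `x²` component, i.e. `T^σ = R`; and `R → T` is injective because
`x³ − F` has positive degree over the domain `R`.
-/

open MvPolynomial

noncomputable section

/-- `F(y,z,w)` viewed in `ℂ[x,y,z,w]` (variables `x,y,z,w` indexed `0,1,2,3`). -/
def Fyzw (F₀ : MvPolynomial (Fin 3) ℂ) : MvPolynomial (Fin 4) ℂ :=
  rename ![1, 2, 3] F₀

/-- The principal ideal `(x³ − F)`. -/
def cubicIdeal (F₀ : MvPolynomial (Fin 3) ℂ) : Ideal (MvPolynomial (Fin 4) ℂ) :=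
  Ideal.span {X 0 ^ 3 - Fyzw F₀}

/-- The ℂ-algebra endomorphism of `ℂ[x,y,z,w]` sending `x ↦ λx` and fixing `y,z,w`. -/
def scaleX (lam : ℂ) : MvPolynomial (Fin 4) ℂ →ₐ[ℂ] MvPolynomial (Fin 4) ℂ :=
  aeval (fun i : Fin 4 => if i = 0 then C lam * X 0 else X i)

/-- The quotient ring `T = ℂ[x,y,z,w]/(x³ − F)`. -/
abbrev Tc (F₀ : MvPolynomial (Fin 3) ℂ) : Type :=
  MvPolynomial (Fin 4) ℂ ⧸ cubicIdeal F₀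

/-- The projection to the quotient. -/
def mkTc (F₀ : MvPolynomial (Fin 3) ℂ) : MvPolynomial (Fin 4) ℂ →+* Tc F₀ :=
  Ideal.Quotient.mk (cubicIdeal F₀)

/-- The composite ℂ-algebra map `ℂ[y,z,w] → ℂ[x,y,z,w] → T`. -/
def ψc (F₀ : MvPolynomial (Fin 3) ℂ) : MvPolynomial (Fin 3) ℂ →ₐ[ℂ] Tc F₀ :=
  aeval ![mkTc F₀ (X 1), mkTc F₀ (X 2), mkTc F₀ (X 3)]

namespace PowerBasis

variable {R A : Type*} [CommRing R] [Ring A] [Algebra R A]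

theorem repr_apply_of_gen_eq_smul (B : PowerBasis R A) (τ : A →ₐ[R] A) {μ : R}
    (hτ : τ B.gen = μ • B.gen) (x : A) (i : Fin B.dim) :
    B.basis.repr (τ x) i = μ ^ (i : ℕ) * B.basis.repr x i := by
  have hbasis : ∀ j, τ (B.basis j) = μ ^ (j : ℕ) • B.basis j := fun j => by
    rw [B.basis_eq_pow, map_pow, hτ, smul_pow]
  have hτx : τ x = ∑ j : Fin B.dim, (μ ^ (j : ℕ) * B.basis.repr x j) • B.basis j := by
    conv_lhs => rw [← B.basis.sum_repr x, map_sum]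
    refine Finset.sum_congr rfl fun j _ => ?_
    rw [map_smul, hbasis, smul_smul, mul_comm]
  rw [hτx, B.basis.repr_sum_self]

theorem equalizer_id_eq_bot_of_gen_eq_smul [IsDomain R] (B : PowerBasis R A) (τ : A →ₐ[R] A) {μ : R}
    (hμ : ∀ i, 0 < i → i < B.dim → μ ^ i ≠ 1) (hτ : τ B.gen = μ • B.gen) :
    AlgHom.equalizer τ (AlgHom.id R A) = ⊥ := by
  refine eq_bot_iff.mpr fun x hx => ?_
  have hfix : τ x = x := hx
  rw [← B.basis.sum_repr x]
  refine Subalgebra.sum_mem _ fun i _ => ?_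
  rcases Nat.eq_zero_or_pos i with hi | hi
  · rw [B.basis_eq_pow, hi, pow_zero]
    exact Subalgebra.smul_mem _ (Subalgebra.one_mem _) _
  · have hcoeff : (μ ^ (i : ℕ) - 1) * B.basis.repr x i = 0 := by
      rw [sub_mul, ← B.repr_apply_of_gen_eq_smul τ hτ, hfix, one_mul, sub_self]
    rw [(mul_eq_zero.mp hcoeff).resolve_left (sub_ne_zero.mpr (hμ i hi i.isLt)), zero_smul]
    exact Subalgebra.zero_mem _

end PowerBasis

namespace CubicSurface

variable (F₀ : MvPolynomial (Fin 3) ℂ)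

def cubicPoly : Polynomial (MvPolynomial (Fin 3) ℂ) := Polynomial.X ^ 3 - Polynomial.C F₀

theorem cubicPoly_monic : (cubicPoly F₀).Monic :=
  Polynomial.monic_X_pow_sub_C _ three_ne_zero

theorem cubicPoly_natDegree : (cubicPoly F₀).natDegree = 3 :=
  Polynomial.natDegree_X_pow_sub_C

theorem Fyzw_eq_rename_succ : Fyzw F₀ = rename Fin.succ F₀ := by
  rw [Fyzw]
  congr
  funext i
  fin_cases i <;> rfl

theorem finSuccEquiv_rename_succ (p : MvPolynomial (Fin 3) ℂ) :
    finSuccEquiv ℂ 3 (rename Fin.succ p) = Polynomial.C p := by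
  have h : (finSuccEquiv ℂ 3).toAlgHom.comp (rename Fin.succ) =
      IsScalarTower.toAlgHom ℂ (MvPolynomial (Fin 3) ℂ) (Polynomial (MvPolynomial (Fin 3) ℂ)) :=
    algHom_ext fun i => by simp [finSuccEquiv_X_succ]
  exact AlgHom.congr_fun h p

theorem map_finSuccEquiv_cubicIdeal :
    Ideal.span {cubicPoly F₀} = (cubicIdeal F₀).map (finSuccEquiv ℂ 3 : _ →+* _) := by
  rw [cubicIdeal, Ideal.map_span, Set.image_singleton]
  simp [Fyzw_eq_rename_succ, finSuccEquiv_X_zero, finSuccEquiv_rename_succ, cubicPoly]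

def quotientEquivAdjoinRoot : Tc F₀ ≃ₐ[ℂ] AdjoinRoot (cubicPoly F₀) :=
  Ideal.quotientEquivAlg _ _ (finSuccEquiv ℂ 3) (map_finSuccEquiv_cubicIdeal F₀)

theorem quotientEquivAdjoinRoot_mkTc (p : MvPolynomial (Fin 4) ℂ) :
    quotientEquivAdjoinRoot F₀ (mkTc F₀ p) = AdjoinRoot.mk _ (finSuccEquiv ℂ 3 p) :=
  rfl

theorem ψc_eq_mkTc_rename (q : MvPolynomial (Fin 3) ℂ) :
    ψc F₀ q = mkTc F₀ (rename Fin.succ q) := by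
  have h : ψc F₀ = (Ideal.Quotient.mkₐ ℂ (cubicIdeal F₀)).comp (rename Fin.succ) :=
    algHom_ext fun i => by fin_cases i <;> simp [ψc, mkTc]
  exact AlgHom.congr_fun h q

theorem quotientEquivAdjoinRoot_ψc (q : MvPolynomial (Fin 3) ℂ) :
    quotientEquivAdjoinRoot F₀ (ψc F₀ q) = algebraMap _ (AdjoinRoot (cubicPoly F₀)) q := by
  rw [ψc_eq_mkTc_rename, quotientEquivAdjoinRoot_mkTc, finSuccEquiv_rename_succ,
    AdjoinRoot.algebraMap_eq]
  rfl

theorem ψc_injective : Function.Injective (ψc F₀) := by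
  have h := AdjoinRoot.of.injective_of_degree_ne_zero
    (by simp [Polynomial.degree_eq_natDegree (cubicPoly_monic F₀).ne_zero, cubicPoly_natDegree] :
      (cubicPoly F₀).degree ≠ 0)
  intro q₁ q₂ hq
  apply h
  rw [← AdjoinRoot.algebraMap_eq, ← quotientEquivAdjoinRoot_ψc, ← quotientEquivAdjoinRoot_ψc, hq]

theorem scaleX_X_zero (lam : ℂ) : scaleX lam (X 0) = C lam * X 0 := by
  simp [scaleX]

theorem scaleX_rename_succ (lam : ℂ) (p : MvPolynomial (Fin 3) ℂ) :
    scaleX lam (rename Fin.succ p) = rename Fin.succ p := by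
  have h : (scaleX lam).comp (rename Fin.succ) = rename (R := ℂ) (Fin.succ : Fin 3 → Fin 4) :=
    algHom_ext fun i => by simp [scaleX, Fin.succ_ne_zero]
  exact AlgHom.congr_fun h p

theorem scaleX_comp_scaleX (a b : ℂ) : (scaleX a).comp (scaleX b) = scaleX (a * b) := by
  refine algHom_ext fun i => ?_
  by_cases hi : i = 0
  · subst hi
    simp [scaleX, mul_comm, mul_left_comm]
  · simp [scaleX, hi]

theorem scaleX_one : scaleX 1 = AlgHom.id ℂ (MvPolynomial (Fin 4) ℂ) :=
  algHom_ext fun i => by by_cases hi : i = 0 <;> simp [scaleX, hi]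

def scaleXEquiv {lam : ℂ} (hlam : lam ≠ 0) :
    MvPolynomial (Fin 4) ℂ ≃ₐ[ℂ] MvPolynomial (Fin 4) ℂ :=
  AlgEquiv.ofAlgHom (scaleX lam) (scaleX lam⁻¹)
    (by rw [scaleX_comp_scaleX, mul_inv_cancel₀ hlam, scaleX_one])
    (by rw [scaleX_comp_scaleX, inv_mul_cancel₀ hlam, scaleX_one])

theorem map_scaleX_cubicIdeal {lam : ℂ} (hlam : lam ^ 3 = 1) :
    (cubicIdeal F₀).map (scaleX lam) = cubicIdeal F₀ := by
  have hgen : scaleX lam (X 0 ^ 3 - Fyzw F₀) = X 0 ^ 3 - Fyzw F₀ := by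
    rw [map_sub, map_pow, Fyzw_eq_rename_succ, scaleX_rename_succ, scaleX_X_zero, mul_pow,
      ← C_pow, hlam, C_1, one_mul]
  rw [cubicIdeal, Ideal.map_span, Set.image_singleton, hgen]

def scaleXQuotient {lam : ℂ} (hlam : lam ^ 3 = 1) : Tc F₀ ≃ₐ[ℂ] Tc F₀ :=
  Ideal.quotientEquivAlg _ _ (scaleXEquiv (by rintro rfl; norm_num at hlam))
    (map_scaleX_cubicIdeal F₀ hlam).symm

theorem scaleXQuotient_mkTc {lam : ℂ} (hlam : lam ^ 3 = 1) (r : MvPolynomial (Fin 4) ℂ) :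
    scaleXQuotient F₀ hlam (mkTc F₀ r) = mkTc F₀ (scaleX lam r) :=
  rfl

section Lift

def LiftsScaleX (lam : ℂ) (τ : Tc F₀ ≃ₐ[ℂ] Tc F₀) : Prop :=
  ∀ r, τ (mkTc F₀ r) = mkTc F₀ (scaleX lam r)

variable {F₀} {lam : ℂ} (τ : Tc F₀ ≃ₐ[ℂ] Tc F₀)

theorem ψc_fixed (hτ : LiftsScaleX F₀ lam τ) (q : MvPolynomial (Fin 3) ℂ) :
    τ (ψc F₀ q) = ψc F₀ q := by
  rw [ψc_eq_mkTc_rename, hτ, scaleX_rename_succ]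

def adjoinRootConj (hτ : LiftsScaleX F₀ lam τ) :
    AdjoinRoot (cubicPoly F₀) →ₐ[MvPolynomial (Fin 3) ℂ] AdjoinRoot (cubicPoly F₀) where
  toRingHom := ((quotientEquivAdjoinRoot F₀).symm.trans (τ.trans (quotientEquivAdjoinRoot F₀)))
  commutes' q := by
    change quotientEquivAdjoinRoot F₀ (τ ((quotientEquivAdjoinRoot F₀).symm
      (algebraMap _ (AdjoinRoot (cubicPoly F₀)) q))) = _
    rw [← quotientEquivAdjoinRoot_ψc, AlgEquiv.symm_apply_apply, ψc_fixed τ hτ]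

theorem adjoinRootConj_apply (hτ : LiftsScaleX F₀ lam τ) (t : Tc F₀) :
    adjoinRootConj τ hτ (quotientEquivAdjoinRoot F₀ t) = quotientEquivAdjoinRoot F₀ (τ t) :=
  congrArg _ (congrArg τ ((quotientEquivAdjoinRoot F₀).symm_apply_apply t))

theorem adjoinRootConj_root (hτ : LiftsScaleX F₀ lam τ) :
    adjoinRootConj τ hτ (AdjoinRoot.root _) =
      (C lam : MvPolynomial (Fin 3) ℂ) • AdjoinRoot.root _ := by
  have hx : quotientEquivAdjoinRoot F₀ (mkTc F₀ (X 0)) = AdjoinRoot.root _ := by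
    rw [quotientEquivAdjoinRoot_mkTc, finSuccEquiv_X_zero]
    rfl
  rw [← hx, adjoinRootConj_apply, hτ, scaleX_X_zero, map_mul]
  change quotientEquivAdjoinRoot F₀ (algebraMap ℂ _ lam * _) = _
  rw [map_mul, AlgEquiv.commutes, ← Algebra.smul_def,
    ← algebraMap_smul (MvPolynomial (Fin 3) ℂ), algebraMap_eq]

theorem range_ψc_eq_equalizer (hτ : LiftsScaleX F₀ lam τ) (hlam : IsPrimitiveRoot lam 3) :
    (ψc F₀).range = AlgHom.equalizer (τ : Tc F₀ →ₐ[ℂ] Tc F₀) (AlgHom.id ℂ (Tc F₀)) := by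
  have hμ : ∀ i, 0 < i → i < (AdjoinRoot.powerBasis' (cubicPoly_monic F₀)).dim →
      (C lam : MvPolynomial (Fin 3) ℂ) ^ i ≠ 1 := by
    intro i hi hi3
    rw [AdjoinRoot.powerBasis'_dim, cubicPoly_natDegree] at hi3
    exact (hlam.map_of_injective (C_injective (Fin 3) ℂ)).pow_ne_one_of_pos_of_lt hi.ne' hi3
  have hbot := (AdjoinRoot.powerBasis' (cubicPoly_monic F₀)).equalizer_id_eq_bot_of_gen_eq_smul
    (adjoinRootConj τ hτ) hμ (adjoinRootConj_root τ hτ)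
  ext t
  simp only [AlgHom.mem_range, AlgHom.mem_equalizer, AlgEquiv.coe_toAlgHom, AlgHom.id_apply]
  constructor
  · rintro ⟨q, rfl⟩
    exact ψc_fixed τ hτ q
  · intro ht
    have hΦt : quotientEquivAdjoinRoot F₀ t ∈
        AlgHom.equalizer (adjoinRootConj τ hτ) (AlgHom.id _ _) := by
      rw [AlgHom.mem_equalizer, adjoinRootConj_apply, ht, AlgHom.id_apply]
    rw [hbot, Algebra.mem_bot] at hΦt
    obtain ⟨q, hq⟩ := hΦt
    exact ⟨q, (quotientEquivAdjoinRoot F₀).injective (by rw [quotientEquivAdjoinRoot_ψc, hq])⟩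

end Lift

end CubicSurface

theorem quotient_of_cubic_surface_by_order_three
    (F₀ : MvPolynomial (Fin 3) ℂ) (lam : ℂ) (hlam : IsPrimitiveRoot lam 3) :
    -- the automorphism x ↦ λx preserves the ideal (x³ − F) ...
    Ideal.map (scaleX lam) (cubicIdeal F₀) = cubicIdeal F₀ ∧
    -- ... hence descends to an automorphism σ of T ...
    ∃ σ : Tc F₀ ≃ₐ[ℂ] Tc F₀,
      (∀ r : MvPolynomial (Fin 4) ℂ, σ (mkTc F₀ r) = mkTc F₀ (scaleX lam r)) ∧
      ∀ τ : Tc F₀ ≃ₐ[ℂ] Tc F₀,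
        (∀ r : MvPolynomial (Fin 4) ℂ, τ (mkTc F₀ r) = mkTc F₀ (scaleX lam r)) →
        -- the composite ℂ[y,z,w] → T takes values in T^σ and induces an
        -- isomorphism ℂ[y,z,w] ≅ T^σ:
        (ψc F₀).range =
            AlgHom.equalizer (τ : Tc F₀ →ₐ[ℂ] Tc F₀) (AlgHom.id ℂ (Tc F₀)) ∧
          Function.Injective (ψc F₀) :=
  ⟨CubicSurface.map_scaleX_cubicIdeal F₀ hlam.pow_eq_one,
    CubicSurface.scaleXQuotient F₀ hlam.pow_eq_one, CubicSurface.scaleXQuotient_mkTc F₀ _,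
    fun τ hτ => ⟨CubicSurface.range_ψc_eq_equalizer τ hτ hlam, CubicSurface.ψc_injective F₀⟩⟩
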